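/- Let λ = ((2n₁)^{2m₁}, …, (2n_k)^{2m_k}) be a quadrated partition with n₁ > 1, and suppose that m₁ > 1 or k > 1. Then SG(L(λ)) = SG(T(λ)) = 1 in LCTR. -/

import Mathlib

/-!
Write `PairedBlocks d t` when `t = v₁^{2e₁} ++ v₂^{2e₂} ++ ⋯` with `d > v₁ > v₂ > ⋯ > 0`, all
`vᵢ ≡ d (mod 2)`, and all `eᵢ > 0`. Positions `d^a ++ t` with `PairedBlocks d t` are closed under
both moves: `L` lowers every part by one, which preserves the parity alignment and can only
delete a final block of 1's, while `T` shortens the head block or, once it is used up, makes the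
next block the head. On these positions SG has a closed form, `blockSG d a |t|`: it is the parity
of `d + a`, except on positions with one or two columns or one or two rows. The formula is
checked by strong induction on the size of the position, every step being a mex of two
known values. Both moves from a quadrated `λ` as in the theorem land on positions of the
generic kind with `d + a` odd, hence of value 1.
-/

/-- Remove the left column of a Young diagram: subtract 1 from each part and
omit nonpositive values. -/
def leftCol (l : List ℕ) : List ℕ := (l.map (· - 1)).filter (0 < ·)

/-- Remove the top row of a Young diagram. -/
def topRow (l : List ℕ) : List ℕ := l.tail

/-- Minimum excluded value of a set of naturals. -/
noncomputable def mex (s : Set ℕ) : ℕ := sInf {n | n ∉ s}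

def wt (l : List ℕ) : ℕ := l.sum + l.length

lemma wt_leftCol_le (l : List ℕ) : wt (leftCol l) ≤ l.sum := by
  induction l with
  | nil => simp [leftCol, wt]
  | cons a t ih =>
    simp only [leftCol, wt] at ih ⊢
    rw [List.map_cons, List.filter_cons]
    by_cases h : 0 < a - 1
    · simp only [h, decide_true, if_true, List.sum_cons, List.length_cons]
      omega
    · simp only [h, decide_false, Bool.false_eq_true, if_false, List.sum_cons]
      omega

lemma wt_leftCol_lt (l : List ℕ) (h : l ≠ []) : wt (leftCol l) < wt l := by
  have h1 := wt_leftCol_le l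
  have h2 : 0 < l.length := List.length_pos_iff.mpr h
  unfold wt at *
  omega

lemma wt_topRow_lt (l : List ℕ) (h : l ≠ []) : wt (topRow l) < wt l := by
  cases l with
  | nil => exact absurd rfl h
  | cons a t => simp [topRow, wt]; omega

/-- The Sprague–Grundy value of a position in the LCTR game. -/
noncomputable def SG (l : List ℕ) : ℕ :=
  if h : l = [] then 0
  else mex {SG (leftCol l), SG (topRow l)}
termination_by wt l
decreasing_by
  · exact wt_leftCol_lt l h
  · exact wt_topRow_lt l h

/-- A partition: a non-increasing list of positive integers. -/
def IsPartition (l : List ℕ) : Prop := l.Pairwise (· ≥ ·) ∧ ∀ x ∈ l, 0 < x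

/-- The conjugate partition: the `j`-th part (for `1 ≤ j ≤ l₁`) is the number
of parts of `l` that are at least `j`. -/
def conj (l : List ℕ) : List ℕ :=
  (List.range (l.headD 0)).map (fun j => l.countP (fun x => decide (j < x)))

lemma mex_eq_of_forall_lt_mem {S : Set ℕ} {n : ℕ} (hn : n ∉ S) (hlt : ∀ m < n, m ∈ S) :
    mex S = n :=
  le_antisymm (Nat.sInf_le hn) <| not_lt.mp fun h =>
    Nat.sInf_mem (s := {m | m ∉ S}) ⟨n, hn⟩ (hlt _ h)

lemma mex_pair (x y : ℕ) :
    mex {x, y} = if x = 0 ∨ y = 0 then (if x = 1 ∨ y = 1 then 2 else 1) else 0 := by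
  apply mex_eq_of_forall_lt_mem <;> simp only [Set.mem_insert_iff, Set.mem_singleton_iff] <;>
    split_ifs <;> omega

lemma SG_nil : SG [] = 0 := by
  rw [SG, dif_pos rfl]

lemma SG_of_ne_nil {l : List ℕ} (h : l ≠ []) : SG l = mex {SG (leftCol l), SG (topRow l)} := by
  rw [SG, dif_neg h]

lemma leftCol_append (l₁ l₂ : List ℕ) : leftCol (l₁ ++ l₂) = leftCol l₁ ++ leftCol l₂ := by
  simp only [leftCol, List.map_append, List.filter_append]

lemma leftCol_replicate_one (a : ℕ) : leftCol (List.replicate a 1) = [] := by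
  simp [leftCol, List.map_replicate]

lemma leftCol_replicate {d : ℕ} (a : ℕ) (hd : 2 ≤ d) :
    leftCol (List.replicate a d) = List.replicate a (d - 1) := by
  simp only [leftCol, List.map_replicate, List.filter_replicate]
  rw [if_pos (by simp only [decide_eq_true_eq]; omega)]

lemma topRow_replicate_succ_append (a d : ℕ) (t : List ℕ) :
    topRow (List.replicate (a + 1) d ++ t) = List.replicate a d ++ t := rfl

inductive PairedBlocks : ℕ → List ℕ → Prop
  | nil (c : ℕ) : PairedBlocks c []
  | cons {c v e : ℕ} {t : List ℕ} (hv : 0 < v) (hvc : v < c) (hpar : v % 2 = c % 2) (he : 0 < e)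
      (ht : PairedBlocks v t) : PairedBlocks c (List.replicate (2 * e) v ++ t)

namespace PairedBlocks

variable {c : ℕ} {t : List ℕ}

lemma eq_nil_of_le_one (h : PairedBlocks c t) (hc : c ≤ 1) : t = [] := by
  cases h with
  | nil => rfl
  | cons hv hvc => omega

lemma leftCol (h : PairedBlocks c t) : PairedBlocks (c - 1) (leftCol t) := by
  induction h with
  | nil => exact nil _
  | @cons c v e t hv hvc hpar he ht ih =>
    rw [leftCol_append]
    obtain rfl | hv2 := (Nat.one_le_iff_ne_zero.mpr hv.ne').eq_or_lt
    · rw [leftCol_replicate_one, ht.eq_nil_of_le_one le_rfl]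
      exact nil _
    · rw [leftCol_replicate _ hv2]
      exact cons (by omega) (by omega) (by omega) he ih

lemma leftCol_ne_nil (h : PairedBlocks c t) (hc : c % 2 = 0) (ht : t ≠ []) :
    _root_.leftCol t ≠ [] := by
  cases h with
  | nil => exact absurd rfl ht
  | cons hv hvc hpar he =>
    rw [leftCol_append, leftCol_replicate _ (by omega)]
    simp only [ne_eq, List.append_eq_nil_iff, List.replicate_eq_nil_iff, not_and]
    omega

end PairedBlocks

def blockSG (d a s : ℕ) : ℕ :=
  if d = 1 ∨ (a = 1 ∧ s = 0) then 1 + (d + a) % 2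
  else if d = 2 ∨ (a = 2 ∧ s = 0) then 2 * ((d + a) % 2)
  else (d + a) % 2

lemma blockSG_of_three_le {d a s : ℕ} (hd : 3 ≤ d) (has : 2 < a ∨ s ≠ 0) :
    blockSG d a s = (d + a) % 2 := by
  unfold blockSG
  split_ifs <;> omega

lemma mex_blockSG_succ {d a s sL : ℕ} (hd : 2 ≤ d) (ha : 0 < a) :
    mex {blockSG (d - 1) (a + 1) sL, blockSG d a s} = blockSG d (a + 1) s := by
  rw [mex_pair]; unfold blockSG; grind

lemma mex_blockSG_one_nil {d : ℕ} (hd : 2 ≤ d) :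
    mex {blockSG (d - 1) 1 0, 0} = blockSG d 1 0 := by
  rw [mex_pair]; unfold blockSG; grind

lemma mex_blockSG_one_cons {d v e s sL : ℕ} (hd : 2 ≤ d) (hpar : v % 2 = d % 2) (he : 0 < e)
    (hs : d % 2 = 0 → sL ≠ 0) :
    mex {blockSG (d - 1) 1 sL, blockSG v (2 * e) s} = blockSG d 1 (2 * e + s) := by
  rw [mex_pair]; unfold blockSG; grind

lemma SG_replicate_one (a : ℕ) : SG (List.replicate (a + 1) 1) = 1 + a % 2 := by
  rw [SG_of_ne_nil (by simp), leftCol_replicate_one,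
    show topRow (List.replicate (a + 1) 1) = List.replicate a 1 from rfl, SG_nil, mex_pair]
  cases a with
  | zero => rw [List.replicate_zero, SG_nil]; rfl
  | succ a => rw [SG_replicate_one a]; grind

theorem SG_replicate_append {d a : ℕ} {t : List ℕ} (hd : 0 < d) (ha : 0 < a)
    (ht : PairedBlocks d t) : SG (List.replicate a d ++ t) = blockSG d a t.length := by
  induction hw : wt (List.replicate a d ++ t) using Nat.strong_induction_on generalizing d a t with
  | _ w ih =>
  obtain ⟨a, rfl⟩ := Nat.exists_eq_add_of_lt ha
  rw [zero_add] at hw ⊢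
  have hne : List.replicate (a + 1) d ++ t ≠ [] := by simp
  obtain rfl | hd2 := (Nat.one_le_iff_ne_zero.mpr hd.ne').eq_or_lt
  · rw [ht.eq_nil_of_le_one le_rfl, List.append_nil, SG_replicate_one]
    simp only [blockSG, true_or, if_true]
    omega
  have hL : leftCol (List.replicate (a + 1) d ++ t) =
      List.replicate (a + 1) (d - 1) ++ leftCol t := by
    rw [leftCol_append, leftCol_replicate _ hd2]
  have hT := topRow_replicate_succ_append a d t
  have hwL := hL ▸ hw ▸ wt_leftCol_lt _ hne
  have hwT := hT ▸ hw ▸ wt_topRow_lt _ hne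
  rw [SG_of_ne_nil hne, hL, hT, ih _ hwL (by omega) a.succ_pos ht.leftCol rfl]
  have hlen : d % 2 = 0 → t ≠ [] → (leftCol t).length ≠ 0 := fun hd0 hne =>
    mt List.length_eq_zero_iff.mp (ht.leftCol_ne_nil hd0 hne)
  rcases a.eq_zero_or_pos with rfl | ha
  · rw [List.replicate_zero, List.nil_append] at hwT ⊢
    cases ht with
    | nil =>
      rw [SG_nil]
      exact mex_blockSG_one_nil hd2
    | cons hv hvd hpar he ht' =>
      rw [ih _ hwT hv (by omega) ht' rfl, List.length_append, List.length_replicate]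
      exact mex_blockSG_one_cons hd2 hpar he fun hd0 =>
        hlen hd0 (by simp [he.ne'])
  · rw [ih _ hwT hd ha ht rfl]
    exact mex_blockSG_succ hd2 ha

lemma pairedBlocks_flatten_ofFn {k b : ℕ} (n m : Fin k → ℕ) (hn : ∀ i, 0 < n i)
    (hm : ∀ i, 0 < m i) (hdec : StrictAnti n) (hb : ∀ i, n i < b) :
    PairedBlocks (2 * b) (List.ofFn fun i => List.replicate (2 * m i) (2 * n i)).flatten := by
  induction k generalizing b with
  | zero => exact .nil _
  | succ k ih =>
    rw [List.ofFn_succ, List.flatten_cons]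
    exact .cons (by simp [hn]) (by simp [hb]) (by omega) (hm 0) <|
      ih (n ∘ Fin.succ) (m ∘ Fin.succ) (fun _ => hn _) (fun _ => hm _)
        (hdec.comp_strictMono Fin.strictMono_succ) (fun i => hdec (Fin.succ_pos i))

/-- Let `λ = ((2n₁)^{2m₁}, …, (2n_k)^{2m_k})` be a quadrated partition with
`n₁ > 1` and with `m₁ > 1` or `k > 1`. Then `SG(L(λ)) = SG(T(λ)) = 1`. -/
theorem SG_quadrated_moves (k : ℕ) (hk : 0 < k) (n m : Fin k → ℕ)
    (hn : ∀ i, 0 < n i) (hm : ∀ i, 0 < m i)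
    (hdec : ∀ i j : Fin k, i < j → n j < n i)
    (hn1 : 1 < n ⟨0, hk⟩) (h : 1 < m ⟨0, hk⟩ ∨ 1 < k) :
    SG (leftCol ((List.ofFn (fun i => List.replicate (2 * m i) (2 * n i))).flatten)) = 1 ∧
    SG (topRow ((List.ofFn (fun i => List.replicate (2 * m i) (2 * n i))).flatten)) = 1 := by
  cases k with
  | zero => omega
  | succ k =>
  change 1 < n 0 at hn1
  change 1 < m 0 ∨ 1 < k + 1 at h
  set rest := (List.ofFn fun i : Fin k => List.replicate (2 * m i.succ) (2 * n i.succ)).flatten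
  have hflat : (List.ofFn fun i => List.replicate (2 * m i) (2 * n i)).flatten =
      List.replicate (2 * m 0) (2 * n 0) ++ rest := by
    rw [List.ofFn_succ, List.flatten_cons]
  have hrest : PairedBlocks (2 * n 0) rest :=
    pairedBlocks_flatten_ofFn _ _ (fun _ => hn _) (fun _ => hm _)
      (StrictAnti.comp_strictMono hdec Fin.strictMono_succ) (fun i => hdec _ _ (Fin.succ_pos i))
  have hlong : 1 < m 0 ∨ rest ≠ [] := h.imp_right fun hk => by
    simp only [rest, ne_eq, List.flatten_eq_nil_iff, List.forall_mem_ofFn_iff,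
      List.replicate_eq_nil_iff, not_forall]
    exact ⟨⟨0, by omega⟩, by simp [(hm _).ne']⟩
  have hm0 := hm 0
  constructor
  · have hs : 2 < 2 * m 0 ∨ (leftCol rest).length ≠ 0 := hlong.imp (by omega) fun hne =>
      mt List.length_eq_zero_iff.mp (hrest.leftCol_ne_nil (by omega) hne)
    rw [hflat, leftCol_append, leftCol_replicate _ (by omega),
      SG_replicate_append (by omega) (by omega) hrest.leftCol, blockSG_of_three_le (by omega) hs]
    omega
  · obtain ⟨a, ha⟩ : ∃ a, 2 * m 0 = a + 1 := ⟨2 * m 0 - 1, by omega⟩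
    have hs : 2 < a ∨ rest.length ≠ 0 := hlong.imp (by omega) (by simpa using ·)
    rw [hflat, ha, topRow_replicate_succ_append, SG_replicate_append (by omega) (by omega) hrest,
      blockSG_of_three_le (by omega) hs]
    omega
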